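/- arXiv:2601.22174 — 2 statements merged into one kernel-verified Lean document; each statement's English description precedes it below -/
import Mathlib

section
/- If f : [a,b] → [0,1] is continuous at x₀ ∈ [a,b], then D_n^{(m)}(f;x₀) → f(x₀) as n → ∞. -/
open MeasureTheory

/-- The kernel `φ_σ` built from a sigmoidal function `σ`. -/
noncomputable def phiSigma (σ : ℝ → ℝ) (x : ℝ) : ℝ := (σ (x + 1) - σ (x - 1)) / 2

/-- The Durrmeyer-type max-min neural network operator `D_n^{(m)}`. -/
noncomputable def Dmm (χ σ : ℝ → ℝ) (a b : ℤ) (n : ℕ) (f : ℝ → ℝ) (x : ℝ) : ℝ :=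
  sSup ((fun k : ℤ =>
      min ((∫ t in (a:ℝ)..(b:ℝ), χ ((n : ℝ) * t - (k : ℝ)) * f t) /
            (∫ t in (a:ℝ)..(b:ℝ), χ ((n : ℝ) * t - (k : ℝ))))
        (phiSigma σ ((n : ℝ) * x - (k : ℝ)) /
          sSup ((fun d : ℤ => phiSigma σ ((n : ℝ) * x - (d : ℝ))) ''
            Set.Icc ((n : ℤ) * a) ((n : ℤ) * b - 1)))) ''
    Set.Icc ((n : ℤ) * a) ((n : ℤ) * b - 1))

/-!
For large `n` the nearest admissible index `k₀` to `n x₀` maximises `φ_σ(n x₀ - k)`, because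
`φ_σ` is even and decreasing on `[0, ∞)` (concavity of `σ` plus the symmetry of `σ - 1/2`); hence
the `k₀`-th term of the max-min equals its Durrmeyer average. Every average whose index is
within `n δ / 2` of `n x₀` is close to `f x₀`, since its kernel `χ(n · - k)` puts all but a
tail mass `O(∫_{|u| > nδ/2} χ)` on the `δ`-neighbourhood of `x₀`, while its total mass is at
least `∫₀¹ χ / n`. Every other index has `φ_σ(n x₀ - k) ≤ φ_σ(n δ / 2) → 0`, so its term is small.
-/

open Filter Topology Set

theorem ConcaveOn.endpoint_add_le {D : Set ℝ} {g : ℝ → ℝ} (hg : ConcaveOn ℝ D g) {p q s : ℝ}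
    (hp : p ∈ D) (hs : s ∈ D) (hpq : p ≤ q) (hqs : q ≤ s) :
    g p + g s ≤ g q + g (p + s - q) := by
  rcases (hpq.trans hqs).eq_or_lt with rfl | hps
  · obtain rfl : q = p := le_antisymm hqs hpq
    simp
  -- `q` and `p + s - q` are the convex combinations of `p, s` with swapped weights `θ, 1 - θ`
  set θ := (s - q) / (s - p)
  have hθ0 : 0 ≤ θ := div_nonneg (by linarith) (by linarith)
  have hθ1 : 0 ≤ 1 - θ := by
    rw [sub_nonneg, div_le_one (by linarith)]; linarith
  have hq := hg.2 hp hs hθ0 hθ1 (by ring)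
  have hq' := hg.2 hp hs hθ1 hθ0 (by ring)
  have e₁ : θ • p + (1 - θ) • s = q := by
    simp only [θ, smul_eq_mul]; field_simp; ring
  have e₂ : (1 - θ) • p + θ • s = p + s - q := by
    simp only [θ, smul_eq_mul]; field_simp; ring
  rw [e₁] at hq
  rw [e₂] at hq'
  simp only [smul_eq_mul] at hq hq'
  linarith

section Kernel

variable {σ : ℝ → ℝ}

theorem phiSigma_neg (hodd : ∀ x : ℝ, σ (-x) - 1/2 = -(σ x - 1/2)) (y : ℝ) :
    phiSigma σ (-y) = phiSigma σ y := by
  have h₁ := hodd (y - 1)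
  have h₂ := hodd (y + 1)
  rw [phiSigma, phiSigma, show -y + 1 = -(y - 1) by ring, show -y - 1 = -(y + 1) by ring]
  linarith

theorem phiSigma_antitoneOn (hodd : ∀ x : ℝ, σ (-x) - 1/2 = -(σ x - 1/2))
    (hconc : ConcaveOn ℝ (Ici 0) σ) : AntitoneOn (phiSigma σ) (Ici 0) := by
  have step_ge_one : ∀ {y₁ y₂ : ℝ}, 1 ≤ y₁ → y₁ ≤ y₂ → phiSigma σ y₂ ≤ phiSigma σ y₁ := by
    intro y₁ y₂ h₁ h₁₂
    have h := hconc.endpoint_add_le (p := y₁ - 1) (q := y₁ + 1) (s := y₂ + 1)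
      (mem_Ici.2 (by linarith)) (mem_Ici.2 (by linarith)) (by linarith) (by linarith)
    rw [show y₁ - 1 + (y₂ + 1) - (y₁ + 1) = y₂ - 1 by ring] at h
    rw [phiSigma, phiSigma]; linarith
  -- on `[0, 1]` the point `y - 1` is negative; reflect it with the oddness of `σ - 1/2`
  have step_le_one : ∀ {y₁ y₂ : ℝ}, 0 ≤ y₁ → y₁ ≤ y₂ → y₂ ≤ 1 →
      phiSigma σ y₂ ≤ phiSigma σ y₁ := by
    intro y₁ y₂ h₀ h₁₂ h₂
    have r₁ := hodd (1 - y₁)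
    have r₂ := hodd (1 - y₂)
    rw [neg_sub] at r₁ r₂
    have h := hconc.endpoint_add_le (p := 1 - y₂) (q := 1 - y₁) (s := y₂ + 1)
      (mem_Ici.2 (by linarith)) (mem_Ici.2 (by linarith)) (by linarith) (by linarith)
    rw [show 1 - y₂ + (y₂ + 1) - (1 - y₁) = y₁ + 1 by ring] at h
    rw [phiSigma, phiSigma]; linarith
  intro y₁ h₀ y₂ _ h₁₂
  rcases le_total 1 y₁ with h₁ | h₁
  · exact step_ge_one h₁ h₁₂
  rcases le_total y₂ 1 with h₂ | h₂
  · exact step_le_one h₀ h₁₂ h₂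
  · exact (step_ge_one le_rfl h₂).trans (step_le_one h₀ h₁ le_rfl)

theorem phiSigma_le_of_abs_le (hodd : ∀ x : ℝ, σ (-x) - 1/2 = -(σ x - 1/2))
    (hconc : ConcaveOn ℝ (Ici 0) σ) {u v : ℝ} (h : |u| ≤ |v|) :
    phiSigma σ v ≤ phiSigma σ u := by
  have habs : ∀ w, phiSigma σ |w| = phiSigma σ w := fun w => by
    rcases abs_choice w with hw | hw <;> rw [hw]
    exact phiSigma_neg hodd w
  rw [← habs u, ← habs v]
  exact phiSigma_antitoneOn hodd hconc (abs_nonneg u) ((abs_nonneg u).trans h) h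

theorem phiSigma_one_pos (h31 : σ 1 < σ 3) (hconc : ConcaveOn ℝ (Ici 0) σ) :
    0 < phiSigma σ 1 := by
  have mid : ∀ x y : ℝ, 0 ≤ x → 0 ≤ y → (σ x + σ y) / 2 ≤ σ ((x + y) / 2) := by
    intro x y hx hy
    have h := hconc.2 (mem_Ici.2 hx) (mem_Ici.2 hy) (show (0:ℝ) ≤ 1/2 by norm_num)
      (show (0:ℝ) ≤ 1/2 by norm_num) (by norm_num)
    simp only [smul_eq_mul] at h
    rw [show 1/2 * x + 1/2 * y = (x + y) / 2 by ring] at h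
    linarith
  have h₀₂ := mid 0 2 le_rfl zero_le_two
  have h₁₃ := mid 1 3 zero_le_one (by norm_num)
  rw [show ((0:ℝ) + 2) / 2 = 1 by norm_num] at h₀₂
  rw [show ((1:ℝ) + 3) / 2 = 2 by norm_num] at h₁₃
  rw [phiSigma, show (1:ℝ) + 1 = 2 by norm_num, sub_self]
  linarith

theorem tendsto_phiSigma_atTop (htop : Tendsto σ atTop (𝓝 1)) :
    Tendsto (phiSigma σ) atTop (𝓝 0) := by
  have hr := htop.comp (tendsto_atTop_add_const_right atTop 1 tendsto_id)
  have hl := htop.comp (tendsto_atTop_add_const_right atTop (-1) tendsto_id)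
  have h := (hr.sub hl).div_const 2
  rwa [sub_self, zero_div] at h

end Kernel

theorem abs_sSup_image_min_div_sub_le {ι : Type*} {S : Set ι} (hS : S.Finite) {u w : ι → ℝ}
    {k₀ : ι} (hk₀ : k₀ ∈ S) (hw_le : ∀ d ∈ S, w d ≤ w k₀) (hw₀ : 0 < w k₀) {L η : ℝ}
    (hL0 : 0 ≤ L) (hL1 : L ≤ 1) (hu₀ : |u k₀ - L| ≤ η)
    (hnear_or_far : ∀ k ∈ S, |u k - L| ≤ η ∨ w k ≤ η * w k₀) :
    |sSup ((fun k => min (u k) (w k / sSup (w '' S))) '' S) - L| ≤ η := by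
  have hW : sSup (w '' S) = w k₀ :=
    IsGreatest.csSup_eq ⟨mem_image_of_mem w hk₀, forall_mem_image.2 hw_le⟩
  rw [hW, abs_le]
  constructor
  · refine le_sub_iff_add_le.2 (le_csSup_of_le ((hS.image _).bddAbove) (mem_image_of_mem _ hk₀) ?_)
    rw [div_self hw₀.ne']
    exact le_min (by linarith [(abs_le.1 hu₀).1]) (by linarith [abs_nonneg (u k₀ - L)])
  · refine sub_le_iff_le_add'.2 (csSup_le ((nonempty_of_mem hk₀).image _) ?_)
    rintro _ ⟨k, hk, rfl⟩
    rcases hnear_or_far k hk with hnear | hfar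
    · exact (min_le_left _ _).trans (by linarith [(abs_le.1 hnear).2])
    · refine (min_le_right _ _).trans ?_
      rw [div_le_iff₀ hw₀]
      nlinarith

theorem exists_nearest_mem_Icc {p q : ℤ} (hpq : p ≤ q) {y : ℝ} (hpy : (p : ℝ) ≤ y)
    (hyq : y ≤ q + 1) :
    ∃ k ∈ Icc p q, |y - k| ≤ 1 ∧ ∀ d ∈ Icc p q, |y - k| ≤ |y - d| := by
  obtain ⟨k, hk, hmin⟩ := (Icc p q).exists_min_image (fun d : ℤ => |y - d|) (finite_Icc p q)
    (nonempty_Icc.2 hpq)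
  refine ⟨k, hk, ?_, hmin⟩
  have hp_floor : p ≤ ⌊y⌋ := Int.le_floor.2 hpy
  refine (hmin (min q ⌊y⌋) ⟨le_min hpq hp_floor, min_le_left _ _⟩).trans ?_
  rcases le_total ⌊y⌋ q with h | h
  · rw [min_eq_right h, Int.self_sub_floor, abs_of_nonneg (Int.fract_nonneg y)]
    exact (Int.fract_lt_one y).le
  · rw [min_eq_left h]
    have : (q : ℝ) ≤ y := Int.le_floor.1 h
    rw [abs_le]; constructor <;> linarith

section Durrmeyer

variable {χ : ℝ → ℝ}

theorem setIntegral_comp_mul_sub_le {ψ : ℝ → ℝ} (hψ0 : ∀ u, 0 ≤ ψ u) (hψ : Integrable ψ)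
    {n : ℝ} (hn : 0 < n) (k : ℝ) (s : Set ℝ) :
    ∫ t in s, ψ (n * t - k) ≤ n⁻¹ * ∫ u, ψ u :=
  calc ∫ t in s, ψ (n * t - k) ≤ ∫ t, ψ (n * t - k) :=
        setIntegral_le_integral ((hψ.comp_sub_right k).comp_mul_left' hn.ne')
          (Eventually.of_forall fun _ => hψ0 _)
    _ = n⁻¹ * ∫ u, ψ u := by
        rw [Measure.integral_comp_mul_left (fun u => ψ (u - k)) n, integral_sub_right_eq_self,
          smul_eq_mul, abs_of_pos (inv_pos.2 hn)]

theorem integral_unit_div_le_integral_comp_mul_sub (hχ0 : ∀ u, 0 ≤ χ u) (hχ : Integrable χ)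
    {a b n k : ℝ} (hn : 0 < n) (hak : n * a ≤ k) (hkb : k + 1 ≤ n * b) :
    (∫ u in (0:ℝ)..1, χ u) / n ≤ ∫ t in a..b, χ (n * t - k) := by
  have hχnk : Integrable (fun t => χ (n * t - k)) :=
    (hχ.comp_sub_right k).comp_mul_left' hn.ne'
  calc (∫ u in (0:ℝ)..1, χ u) / n = ∫ t in k / n..(k + 1) / n, χ (n * t - k) := by
        rw [intervalIntegral.integral_comp_mul_sub χ hn.ne', smul_eq_mul, inv_mul_eq_div]
        congr 2 <;> field_simp <;> ring
    _ ≤ ∫ t in a..b, χ (n * t - k) :=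
        intervalIntegral.integral_mono_interval ((le_div_iff₀ hn).2 (by linarith))
          (by gcongr; linarith) ((div_le_iff₀ hn).2 (by linarith))
          (Eventually.of_forall fun _ => hχ0 _) hχnk.intervalIntegrable

theorem tendsto_setIntegral_compl_Ioc_neg (hχ : Integrable χ) :
    Tendsto (fun R => ∫ u in (Ioc (-R) R)ᶜ, χ u) atTop (𝓝 0) := by
  have h := (intervalIntegral_tendsto_integral hχ tendsto_neg_atTop_atBot tendsto_id).const_sub
    (∫ u, χ u)
  rw [sub_self] at h
  refine h.congr' ((eventually_ge_atTop 0).mono fun R hR => ?_)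
  rw [id, intervalIntegral.integral_of_le (by linarith), ← integral_add_compl measurableSet_Ioc hχ]
  ring

theorem mul_abs_sub_le_add_indicator (hχ0 : ∀ u, 0 ≤ χ u) {f : ℝ → ℝ} {n k t x₀ c ε δ : ℝ}
    (hn : 0 < n) (hε : 0 ≤ ε) (hf_near : |t - x₀| < δ → |f t - c| ≤ ε) (hf_far : |f t - c| ≤ 1)
    (hk : |n * x₀ - k| < n * δ / 2) :
    χ (n * t - k) * |f t - c|
      ≤ ε * χ (n * t - k) + (Ioc (-(n * δ / 2)) (n * δ / 2))ᶜ.indicator χ (n * t - k) := by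
  have hψ0 : 0 ≤ (Ioc (-(n * δ / 2)) (n * δ / 2))ᶜ.indicator χ (n * t - k) :=
    indicator_nonneg (fun u _ => hχ0 u) _
  by_cases hnear : |t - x₀| < δ
  · nlinarith [mul_le_mul_of_nonneg_left (hf_near hnear) (hχ0 (n * t - k))]
  -- off the `δ`-neighbourhood of `x₀` the argument `n t - k` lies in the tail of `χ`
  have hT : n * t - k ∈ (Ioc (-(n * δ / 2)) (n * δ / 2))ᶜ := by
    intro hmem
    have h₁ : n * δ ≤ n * |t - x₀| := mul_le_mul_of_nonneg_left (not_lt.1 hnear) hn.le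
    have h₂ : n * |t - x₀| ≤ |n * t - k| + |n * x₀ - k| := by
      rw [← abs_of_pos hn, ← abs_mul, abs_of_pos hn]
      exact (abs_sub _ _).trans_eq' (by ring_nf)
    have h₃ : |n * t - k| ≤ n * δ / 2 := abs_le.2 ⟨hmem.1.le, hmem.2⟩
    linarith
  rw [indicator_of_mem hT χ]
  nlinarith [mul_le_mul_of_nonneg_left hf_far (hχ0 (n * t - k)), hχ0 (n * t - k)]

theorem abs_integral_mul_sub_le (hχ0 : ∀ u, 0 ≤ χ u) (hχ : Integrable χ) {f : ℝ → ℝ}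
    (hf : Measurable f) {a b n k x₀ c ε δ : ℝ} (hab : a ≤ b) (hn : 0 < n) (hε : 0 ≤ ε)
    (hf_near : ∀ t ∈ Icc a b, |t - x₀| < δ → |f t - c| ≤ ε)
    (hf_far : ∀ t ∈ Icc a b, |f t - c| ≤ 1) (hk : |n * x₀ - k| < n * δ / 2) :
    |(∫ t in a..b, χ (n * t - k) * f t) - c * ∫ t in a..b, χ (n * t - k)|
      ≤ ε * (∫ t in a..b, χ (n * t - k)) + n⁻¹ * ∫ u in (Ioc (-(n * δ / 2)) (n * δ / 2))ᶜ, χ u := by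
  set T := (Ioc (-(n * δ / 2)) (n * δ / 2))ᶜ
  have hψ : Integrable (T.indicator χ) := hχ.indicator measurableSet_Ioc.compl
  have hχnk : Integrable (fun t => χ (n * t - k)) := (hχ.comp_sub_right k).comp_mul_left' hn.ne'
  have hψnk : Integrable (fun t => T.indicator χ (n * t - k)) :=
    (hψ.comp_sub_right k).comp_mul_left' hn.ne'
  have hfχ : IntegrableOn (fun t => χ (n * t - k) * f t) (Ioc a b) := by
    refine (hχnk.integrableOn.const_mul (|c| + 1)).mono'
      (hχnk.1.restrict.mul hf.aestronglyMeasurable.restrict) ?_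
    refine (ae_restrict_iff' measurableSet_Ioc).2 (Eventually.of_forall fun t ht => ?_)
    have hft : |f t| ≤ |c| + 1 := by
      linarith [abs_sub_abs_le_abs_sub (f t) c, hf_far t (Ioc_subset_Icc_self ht)]
    rw [norm_mul, Real.norm_of_nonneg (hχ0 _), Real.norm_eq_abs, mul_comm]
    exact mul_le_mul_of_nonneg_right hft (hχ0 _)
  rw [intervalIntegral.integral_of_le hab, intervalIntegral.integral_of_le hab,
    ← integral_const_mul, ← integral_sub hfχ (hχnk.integrableOn.const_mul c)]
  calc |∫ t in Ioc a b, (χ (n * t - k) * f t - c * χ (n * t - k))|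
      ≤ ∫ t in Ioc a b, (ε * χ (n * t - k) + T.indicator χ (n * t - k)) := by
        rw [← Real.norm_eq_abs]
        refine norm_integral_le_of_norm_le
          ((hχnk.integrableOn.const_mul ε).add hψnk.integrableOn)
          ((ae_restrict_iff' measurableSet_Ioc).2 (Eventually.of_forall fun t ht => ?_))
        have ht' := Ioc_subset_Icc_self ht
        rw [mul_comm c, ← mul_sub, norm_mul, Real.norm_of_nonneg (hχ0 _), Real.norm_eq_abs]
        exact mul_abs_sub_le_add_indicator hχ0 hn hε (hf_near t ht') (hf_far t ht') hk
    _ = ε * (∫ t in Ioc a b, χ (n * t - k)) + ∫ t in Ioc a b, T.indicator χ (n * t - k) := by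
        rw [integral_add (hχnk.integrableOn.const_mul ε) hψnk.integrableOn, integral_const_mul]
    _ ≤ ε * (∫ t in Ioc a b, χ (n * t - k)) + n⁻¹ * ∫ u in T, χ u := by
        rw [← integral_indicator measurableSet_Ioc.compl]
        gcongr
        exact setIntegral_comp_mul_sub_le (indicator_nonneg fun u _ => hχ0 u) hψ hn k _

theorem abs_integral_mul_div_integral_sub_le (hχ0 : ∀ u, 0 ≤ χ u) (hχ : Integrable χ)
    (hA : 0 < ∫ u in (0:ℝ)..1, χ u) {f : ℝ → ℝ} (hf : Measurable f) {a b n k x₀ c ε δ : ℝ}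
    (hn : 0 < n) (hε : 0 ≤ ε) (hak : n * a ≤ k) (hkb : k + 1 ≤ n * b)
    (hf_near : ∀ t ∈ Icc a b, |t - x₀| < δ → |f t - c| ≤ ε)
    (hf_far : ∀ t ∈ Icc a b, |f t - c| ≤ 1) (hk : |n * x₀ - k| < n * δ / 2) :
    |(∫ t in a..b, χ (n * t - k) * f t) / (∫ t in a..b, χ (n * t - k)) - c|
      ≤ ε + (∫ u in (Ioc (-(n * δ / 2)) (n * δ / 2))ᶜ, χ u) / ∫ u in (0:ℝ)..1, χ u := by
  set A := ∫ u in (0:ℝ)..1, χ u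
  set D := ∫ t in a..b, χ (n * t - k)
  set R := ∫ u in (Ioc (-(n * δ / 2)) (n * δ / 2))ᶜ, χ u
  have hab : a ≤ b := le_of_mul_le_mul_left (by linarith) hn
  have hAD : A / n ≤ D := integral_unit_div_le_integral_comp_mul_sub hχ0 hχ hn hak hkb
  have hD : 0 < D := (div_pos hA hn).trans_le hAD
  have hR : 0 ≤ R := setIntegral_nonneg measurableSet_Ioc.compl fun u _ => hχ0 u
  have hnum := abs_integral_mul_sub_le hχ0 hχ hf hab hn hε hf_near hf_far hk
  rw [div_sub' hD.ne', abs_div, abs_of_pos hD, div_le_iff₀ hD, mul_comm D]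
  calc _ ≤ ε * D + n⁻¹ * R := hnum
    _ = ε * D + R / A * (A / n) := by field_simp
    _ ≤ ε * D + R / A * D := by gcongr
    _ = (ε + R / A) * D := by ring

end Durrmeyer

theorem abs_Dmm_sub_le {χ σ f : ℝ → ℝ} (hχ0 : ∀ t, 0 ≤ χ t) (hχint : Integrable χ)
    (hA : 0 < ∫ u in (0:ℝ)..1, χ u) (h31 : σ 1 < σ 3)
    (hodd : ∀ x : ℝ, σ (-x) - 1/2 = -(σ x - 1/2)) (hconc : ConcaveOn ℝ (Ici 0) σ)
    {a b : ℤ} (hab : a < b) (hf : Measurable f)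
    (hf01 : ∀ t ∈ Icc (a:ℝ) (b:ℝ), f t ∈ Icc (0:ℝ) 1) {x₀ : ℝ} (hx₀ : x₀ ∈ Icc (a:ℝ) (b:ℝ))
    {n : ℕ} (hn : 1 ≤ n) {ε δ : ℝ} (hε : 0 ≤ ε)
    (hf_near : ∀ t ∈ Icc (a:ℝ) (b:ℝ), |t - x₀| < δ → |f t - f x₀| ≤ ε) (hR : 1 < n * δ / 2)
    (hφ : phiSigma σ (n * δ / 2) ≤ 2 * ε * phiSigma σ 1)
    (htail : ∫ u in (Ioc (-(n * δ / 2)) (n * δ / 2))ᶜ, χ u ≤ ε * ∫ u in (0:ℝ)..1, χ u) :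
    |Dmm χ σ a b n f x₀ - f x₀| ≤ 2 * ε := by
  have hn0 : (0:ℝ) < n := by exact_mod_cast hn
  have hpq : (n:ℤ) * a ≤ n * b - 1 := by
    have : (n:ℤ) * a < n * b := mul_lt_mul_of_pos_left hab (by exact_mod_cast hn)
    omega
  obtain ⟨k₀, hk₀, hk₀_one, hk₀_min⟩ := exists_nearest_mem_Icc hpq (y := n * x₀)
    (by push_cast; exact mul_le_mul_of_nonneg_left hx₀.1 hn0.le)
    (by push_cast; linarith [mul_le_mul_of_nonneg_left hx₀.2 hn0.le])
  have hf_far : ∀ t ∈ Icc (a:ℝ) (b:ℝ), |f t - f x₀| ≤ 1 := fun t ht =>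
    abs_sub_le_iff.2 ⟨by linarith [(hf01 t ht).2, (hf01 x₀ hx₀).1],
      by linarith [(hf01 t ht).1, (hf01 x₀ hx₀).2]⟩
  have havg : ∀ k ∈ Icc ((n:ℤ) * a) (n * b - 1), |n * x₀ - k| < n * δ / 2 →
      |(∫ t in (a:ℝ)..b, χ (n * t - k) * f t) / (∫ t in (a:ℝ)..b, χ (n * t - k)) - f x₀|
        ≤ 2 * ε := fun k hk hnear => by
    have hak : (n:ℝ) * a ≤ k := by exact_mod_cast hk.1
    have hkb : (k:ℝ) + 1 ≤ n * b := by
      have := hk.2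
      exact_mod_cast (by omega : k + 1 ≤ (n:ℤ) * b)
    refine (abs_integral_mul_div_integral_sub_le hχ0 hχint hA hf hn0 hε hak hkb hf_near hf_far
      hnear).trans ?_
    linarith [(div_le_iff₀ hA).2 htail]
  have hφ₁ : phiSigma σ 1 ≤ phiSigma σ (n * x₀ - k₀) :=
    phiSigma_le_of_abs_le hodd hconc (by rwa [abs_one])
  have hk₀_near : |n * x₀ - k₀| < n * δ / 2 := by linarith
  rw [Dmm]
  refine abs_sSup_image_min_div_sub_le (finite_Icc _ _) hk₀
    (u := fun k : ℤ => (∫ t in (a:ℝ)..b, χ (n * t - k) * f t) / ∫ t in (a:ℝ)..b, χ (n * t - k))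
    (w := fun d : ℤ => phiSigma σ (n * x₀ - d))
    (fun d hd => phiSigma_le_of_abs_le hodd hconc (hk₀_min d hd))
    ((phiSigma_one_pos h31 hconc).trans_le hφ₁) (hf01 x₀ hx₀).1 (hf01 x₀ hx₀).2
    (havg k₀ hk₀ hk₀_near) fun k hk => ?_
  rcases lt_or_ge |n * x₀ - k| (n * δ / 2) with hnear | hfar
  · exact Or.inl (havg k hk hnear)
  · refine Or.inr ?_
    calc phiSigma σ (n * x₀ - k) ≤ phiSigma σ (n * δ / 2) :=
          phiSigma_le_of_abs_le hodd hconc (by rwa [abs_of_pos (by linarith)])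
      _ ≤ 2 * ε * phiSigma σ 1 := hφ
      _ ≤ 2 * ε * phiSigma σ (n * x₀ - k₀) := by gcongr

theorem Dmm_pointwise_convergence_general (χ σ : ℝ → ℝ)
    (hχ0 : ∀ t, 0 ≤ χ t) (hχint : Integrable χ)
    (hA : 0 < ∫ u in (0:ℝ)..1, χ u)
    (htop : Filter.Tendsto σ Filter.atTop (nhds 1))
    (h31 : σ 1 < σ 3)
    (hodd : ∀ x : ℝ, σ (-x) - 1/2 = -(σ x - 1/2))
    (hconc : ConcaveOn ℝ (Set.Ici 0) σ)
    (a b : ℤ) (hab : a < b)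
    (f : ℝ → ℝ) (hf : Measurable f)
    (hf01 : ∀ t ∈ Set.Icc (a:ℝ) (b:ℝ), f t ∈ Set.Icc (0:ℝ) 1)
    (x₀ : ℝ) (hx₀ : x₀ ∈ Set.Icc (a:ℝ) (b:ℝ))
    (hcont : ContinuousWithinAt f (Set.Icc (a:ℝ) (b:ℝ)) x₀) :
    Filter.Tendsto (fun n : ℕ => Dmm χ σ a b n f x₀) Filter.atTop (nhds (f x₀)) := by
  rw [Metric.tendsto_atTop]
  intro ε hε
  obtain ⟨δ, hδ, hfδ⟩ := Metric.continuousWithinAt_iff.1 hcont (ε / 4) (by positivity)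
  have hR : Tendsto (fun n : ℕ => (n:ℝ) * δ / 2) atTop atTop :=
    (tendsto_natCast_atTop_atTop.atTop_mul_const hδ).atTop_div_const two_pos
  have hφ := ((tendsto_phiSigma_atTop htop).comp hR).eventually
    (eventually_le_nhds (mul_pos (by positivity : (0:ℝ) < 2 * (ε / 4))
      (phiSigma_one_pos h31 hconc)))
  have htail := ((tendsto_setIntegral_compl_Ioc_neg hχint).comp hR).eventually
    (eventually_le_nhds (by positivity : 0 < ε / 4 * ∫ u in (0:ℝ)..1, χ u))
  obtain ⟨N, hN⟩ := eventually_atTop.1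
    ((eventually_ge_atTop 1).and ((hR.eventually_gt_atTop 1).and (hφ.and htail)))
  refine ⟨N, fun n hn => ?_⟩
  obtain ⟨hn1, hR1, hφn, htailn⟩ := hN n hn
  have hf_near : ∀ t ∈ Icc (a:ℝ) (b:ℝ), |t - x₀| < δ → |f t - f x₀| ≤ ε / 4 :=
    fun t ht hlt => by simpa only [Real.dist_eq] using (hfδ ht (by rwa [Real.dist_eq])).le
  rw [Real.dist_eq]
  exact (abs_Dmm_sub_le hχ0 hχint hA h31 hodd hconc hab hf hf01 hx₀ hn1 (by positivity) hf_near
    hR1 hφn htailn).trans_lt (by linarith)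

theorem Dmm_pointwise_convergence (χ σ : ℝ → ℝ) (α : ℝ) (hα : 0 < α)
    (hχ0 : ∀ t, 0 ≤ χ t) (hχbdd : ∃ M, ∀ t, χ t ≤ M) (hχint : Integrable χ)
    (hA : 0 < ∫ u in (0:ℝ)..1, χ u)
    (hM0 : ∃ M : ℝ, ∀ t : ℝ, ∀ s : Finset ℤ, ∑ k ∈ s, χ (t - (k : ℝ)) ≤ M)
    (hmono : Monotone σ)
    (hbot : Filter.Tendsto σ Filter.atBot (nhds 0))
    (htop : Filter.Tendsto σ Filter.atTop (nhds 1))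
    (h31 : σ 1 < σ 3)
    (hodd : ∀ x : ℝ, σ (-x) - 1/2 = -(σ x - 1/2))
    (hC2 : ContDiff ℝ 2 σ) (hconc : ConcaveOn ℝ (Set.Ici 0) σ)
    (hdecay : ∃ C B : ℝ, 0 < C ∧ 0 < B ∧ ∀ x : ℝ, x ≤ -B → σ x ≤ C * |x| ^ (-(1 + α)))
    (a b : ℤ) (hab : a < b)
    (f : ℝ → ℝ) (hf : Measurable f)
    (hf01 : ∀ t ∈ Set.Icc (a:ℝ) (b:ℝ), f t ∈ Set.Icc (0:ℝ) 1)
    (x₀ : ℝ) (hx₀ : x₀ ∈ Set.Icc (a:ℝ) (b:ℝ))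
    (hcont : ContinuousWithinAt f (Set.Icc (a:ℝ) (b:ℝ)) x₀) :
    Filter.Tendsto (fun n : ℕ => Dmm χ σ a b n f x₀) Filter.atTop (nhds (f x₀)) :=
  Dmm_pointwise_convergence_general χ σ hχ0 hχint hA htop h31 hodd hconc a b hab f hf hf01 x₀ hx₀
    hcont
end

section
/- If f ∈ C([a,b],[0,1]), then ‖D_n^{(m)}(f) − f‖_∞ → 0 as n → ∞, and consequently for every 1 ≤ p < ∞, ‖D_n^{(m)}(f) − f‖_p → 0, with the bound ‖D_n^{(m)}(f) − f‖_p ≤ (b−a)^{1/p} ‖D_n^{(m)}(f) − f‖_∞. -/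
/-!
Each node `k` with `n x - k ∈ [0, 1]` gives `φ_σ(n x - k) ≥ (σ 1 - σ 0) / 2 > 0` (concavity on
`[0, ∞)` and `σ 1 < σ 3`), so the normalizing maximum in `D_n^{(m)}` stays bounded below. As
`φ_σ` vanishes at infinity, only nodes with `|n x - k|` bounded keep a non-negligible normalized
weight, and for those the Durrmeyer mean of `f` is close to `f x` by uniform continuity of `f`
and integrability of `χ`. The max-min combination is then squeezed within `ε` of `f x`; the
`L^p` statements follow from the uniform one by bounding the integrand by its supremum.
-/

open MeasureTheory

open Filter Set Topology

section Sigmoidal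

variable {σ : ℝ → ℝ}

lemma phiSigma_nonneg (hmono : Monotone σ) (y : ℝ) : 0 ≤ phiSigma σ y := by
  have : σ (y - 1) ≤ σ (y + 1) := hmono (by linarith)
  unfold phiSigma; linarith

lemma sub_div_two_le_phiSigma (hmono : Monotone σ) {y : ℝ} (hy : y ∈ Icc (0 : ℝ) 1) :
    (σ 1 - σ 0) / 2 ≤ phiSigma σ y := by
  have h1 : σ 1 ≤ σ (y + 1) := hmono (by linarith [hy.1])
  have h0 : σ (y - 1) ≤ σ 0 := hmono (by linarith [hy.2])
  unfold phiSigma; linarith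

lemma tendsto_phiSigma_comap_abs_atTop (hbot : Tendsto σ atBot (𝓝 0))
    (htop : Tendsto σ atTop (𝓝 1)) : Tendsto (phiSigma σ) (comap abs atTop) (𝓝 0) := by
  have of_shift_invariant : ∀ {l : Filter ℝ} {c : ℝ}, Tendsto σ l (𝓝 c) →
      (∀ s : ℝ, Tendsto (· + s) l l) → Tendsto (phiSigma σ) l (𝓝 0) := by
    intro l c hσ hl
    show Tendsto (fun y => (σ (y + 1) - σ (y - 1)) / 2) l (𝓝 0)
    simpa [sub_eq_add_neg] using
      ((hσ.comp (hl 1)).sub (hσ.comp (hl (-1)))).div_const 2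
  rw [comap_abs_atTop]
  exact (of_shift_invariant hbot fun s => tendsto_atBot_add_const_right _ s tendsto_id).sup
    (of_shift_invariant htop fun s => tendsto_atTop_add_const_right _ s tendsto_id)

lemma apply_zero_lt_apply_one_of_concaveOn (hconc : ConcaveOn ℝ (Ici 0) σ) (h31 : σ 1 < σ 3) :
    σ 0 < σ 1 := by
  have := hconc.slope_anti_adjacent (x := 0) (y := 1) (z := 3) (by norm_num) (by norm_num)
    one_pos (by norm_num)
  norm_num at this
  linarith

end Sigmoidal

noncomputable def maxMin {ι : Type*} (K : Set ι) (c w : ι → ℝ) : ℝ :=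
  sSup ((fun k => min (c k) (w k / sSup (w '' K))) '' K)

section MaxMin

variable {ι : Type*} {K : Set ι} {c w : ι → ℝ}

lemma maxMin_mem_Icc (hc : ∀ k ∈ K, c k ∈ Icc (0 : ℝ) 1) (hw : ∀ k ∈ K, 0 ≤ w k) :
    maxMin K c w ∈ Icc (0 : ℝ) 1 := by
  have hS : 0 ≤ sSup (w '' K) := Real.sSup_nonneg (forall_mem_image.2 hw)
  refine ⟨Real.sSup_nonneg ?_, Real.sSup_le ?_ zero_le_one⟩ <;> rintro _ ⟨k, hk, rfl⟩
  · exact le_min (hc k hk).1 (div_nonneg (hw k hk) hS)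
  · exact (min_le_left _ _).trans (hc k hk).2

/-- The maximizer of `w` gives the lower bound; any other index has `c k ≤ y + ε` or normalized
weight `w k / S ≤ ε`. -/
lemma abs_maxMin_sub_le (hK : K.Finite) {y ε : ℝ} (hy : 0 ≤ y) (hε : ε < 1)
    (hc : ∀ k ∈ K, c k ≤ 1) (hS : 0 < sSup (w '' K))
    (hnear : ∀ k ∈ K, ε * sSup (w '' K) < w k → |c k - y| ≤ ε) :
    |maxMin K c w - y| ≤ ε := by
  have hne : (w '' K).Nonempty := nonempty_iff_ne_empty.2 fun h => by
    rw [h, Real.sSup_empty] at hS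
    exact lt_irrefl 0 hS
  set S := sSup (w '' K)
  obtain ⟨k₀, hk₀, hwk₀⟩ := hne.csSup_mem (hK.image w)
  have hk₀_near : |c k₀ - y| ≤ ε := hnear k₀ hk₀ (hwk₀ ▸ mul_lt_of_lt_one_left hS hε)
  rw [abs_le, neg_le_sub_iff_le_add, sub_le_iff_le_add']
  constructor
  · calc y ≤ c k₀ + ε := by linarith [(abs_le.1 hk₀_near).1]
      _ = min (c k₀) (w k₀ / S) + ε := by rw [hwk₀, div_self hS.ne', min_eq_left (hc k₀ hk₀)]
      _ ≤ maxMin K c w + ε := by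
        gcongr
        exact le_csSup (hK.image _).bddAbove (mem_image_of_mem _ hk₀)
  · refine csSup_le (hne.of_image.image _) ?_
    rintro _ ⟨k, hk, rfl⟩
    by_cases hk_near : ε * S < w k
    · exact (min_le_left _ _).trans (by linarith [(abs_le.1 (hnear k hk hk_near)).2])
    · have : w k / S ≤ ε := (div_le_iff₀ hS).2 (by linarith)
      exact (min_le_right _ _).trans (by linarith)

end MaxMin

theorem MeasureTheory.Integrable.comp_mul_sub {χ : ℝ → ℝ} (hχ : Integrable χ) {r : ℝ} (hr : r ≠ 0)
    (k : ℝ) : Integrable (fun t => χ (r * t - k)) :=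
  (hχ.comp_sub_right k).comp_mul_left' hr

lemma abs_integral_mul_sub_mul_integral_le {g h f : ℝ → ℝ} {a b y ε : ℝ} (hab : a ≤ b)
    (hg : IntervalIntegrable g volume a b) (hh : IntervalIntegrable h volume a b)
    (hf : ContinuousOn f (Icc a b)) (hg0 : ∀ t ∈ Icc a b, 0 ≤ g t)
    (hh0 : ∀ t ∈ Icc a b, 0 ≤ h t) (hε : 0 ≤ ε) (hf1 : ∀ t ∈ Icc a b, |f t - y| ≤ 1)
    (hfar : ∀ t ∈ Icc a b, ε < |f t - y| → g t ≤ h t) :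
    |(∫ t in a..b, g t * f t) - y * ∫ t in a..b, g t| ≤
      ε * (∫ t in a..b, g t) + ∫ t in a..b, h t := by
  rw [← uIcc_of_le hab] at hf
  calc |(∫ t in a..b, g t * f t) - y * ∫ t in a..b, g t|
      = |∫ t in a..b, g t * (f t - y)| := by
        rw [← intervalIntegral.integral_const_mul,
          ← intervalIntegral.integral_sub (hg.mul_continuousOn hf) (hg.const_mul y)]
        simp_rw [mul_sub, mul_comm y]
    _ ≤ ∫ t in a..b, g t * |f t - y| := by
        refine (intervalIntegral.abs_integral_le_integral_abs hab).trans_eq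
          (intervalIntegral.integral_congr fun t ht => ?_)
        rw [uIcc_of_le hab] at ht
        simp only [abs_mul, abs_of_nonneg (hg0 t ht)]
    _ ≤ ∫ t in a..b, (ε * g t + h t) := by
        refine intervalIntegral.integral_mono_on hab
          (hg.mul_continuousOn (hf.sub continuousOn_const).abs) ((hg.const_mul ε).add hh)
          fun t ht => ?_
        rcases le_or_gt |f t - y| ε with hnear | hfar'
        · nlinarith [hg0 t ht, hh0 t ht]
        · nlinarith [hfar t ht hfar', hf1 t ht, hg0 t ht]
    _ = ε * (∫ t in a..b, g t) + ∫ t in a..b, h t := by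
        rw [intervalIntegral.integral_add (hg.const_mul ε) hh, intervalIntegral.integral_const_mul]

lemma integral_comp_mul_sub_le_integral {g : ℝ → ℝ} (hg : Integrable g) (hg0 : ∀ u, 0 ≤ g u)
    {a b r : ℝ} (hab : a ≤ b) (hr : 0 < r) (k : ℝ) :
    ∫ t in a..b, g (r * t - k) ≤ r⁻¹ * ∫ u, g u := by
  have hrab : r * a - k ≤ r * b - k := by gcongr
  rw [intervalIntegral.integral_comp_mul_sub g hr.ne' k, smul_eq_mul,
    intervalIntegral.integral_of_le hrab]
  exact mul_le_mul_of_nonneg_left (setIntegral_le_integral hg (Eventually.of_forall hg0))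
    (inv_nonneg.2 hr.le)

lemma integral_div_le_integral_comp_mul_sub {χ : ℝ → ℝ} (hχ : Integrable χ) (hχ0 : ∀ u, 0 ≤ χ u)
    {a b r k : ℝ} (hr : 0 < r) (hka : r * a ≤ k) (hkb : k + 1 ≤ r * b) :
    (∫ u in (0 : ℝ)..1, χ u) / r ≤ ∫ t in a..b, χ (r * t - k) := by
  rw [intervalIntegral.integral_comp_mul_sub χ hr.ne' k, smul_eq_mul, div_eq_inv_mul]
  gcongr
  exact intervalIntegral.integral_mono_interval (by linarith) zero_le_one (by linarith)
    (Eventually.of_forall hχ0) hχ.intervalIntegrable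

lemma tendsto_setIntegral_le_abs_atTop_zero {χ : ℝ → ℝ} (hχ : Integrable χ) :
    Tendsto (fun L : ℝ => ∫ u in {u : ℝ | L ≤ |u|}, χ u) atTop (𝓝 0) := by
  have h := tendsto_setIntegral_of_antitone (μ := volume) (f := χ)
    (s := fun L : ℝ => {u : ℝ | L ≤ |u|})
    (fun L => measurableSet_le measurable_const measurable_abs)
    (fun L L' hLL' u hu => hLL'.trans hu) ⟨0, hχ.integrableOn⟩
  have hempty : (⋂ L : ℝ, {u : ℝ | L ≤ |u|}) = ∅ :=
    eq_empty_of_forall_notMem fun u hu => (lt_add_one |u|).not_ge (mem_iInter.1 hu (|u| + 1))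
  rwa [hempty, setIntegral_empty] at h

noncomputable def durrmeyerMean (χ f : ℝ → ℝ) (a b r k : ℝ) : ℝ :=
  (∫ t in a..b, χ (r * t - k) * f t) / ∫ t in a..b, χ (r * t - k)

section DurrmeyerMean

variable {χ f : ℝ → ℝ} {a b r k : ℝ}

lemma durrmeyerMean_mem_Icc (hχ0 : ∀ u, 0 ≤ χ u) (hχ : Integrable χ) (hab : a ≤ b) (hr : r ≠ 0)
    (hf : ContinuousOn f (Icc a b)) (hf01 : MapsTo f (Icc a b) (Icc 0 1)) :
    durrmeyerMean χ f a b r k ∈ Icc (0 : ℝ) 1 := by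
  have hg := (hχ.comp_mul_sub hr k).intervalIntegrable (a := a) (b := b)
  have hD : 0 ≤ ∫ t in a..b, χ (r * t - k) := intervalIntegral.integral_nonneg hab fun t _ => hχ0 _
  refine ⟨div_nonneg ?_ hD, div_le_one_of_le₀ ?_ hD⟩
  · exact intervalIntegral.integral_nonneg hab fun t ht => mul_nonneg (hχ0 _) (hf01 ht).1
  · refine intervalIntegral.integral_mono_on hab
      (hg.mul_continuousOn (by rwa [uIcc_of_le hab])) hg fun t ht => ?_
    exact mul_le_of_le_one_right (hχ0 _) (hf01 ht).2

/-- The `r⁻¹`-scaled tail of `χ` over `|u| ≥ L` bounds the weight that `χ(r · - k)` puts where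
`f` deviates from `y` by more than `ε`; the denominator is at least `(∫_0^1 χ) / r`. -/
lemma abs_durrmeyerMean_sub_le (hχ0 : ∀ u, 0 ≤ χ u) (hχ : Integrable χ)
    (hA : 0 < ∫ u in (0 : ℝ)..1, χ u) (hab : a ≤ b) (hr : 0 < r) (hka : r * a ≤ k)
    (hkb : k + 1 ≤ r * b) (hf : ContinuousOn f (Icc a b)) (hf01 : MapsTo f (Icc a b) (Icc 0 1))
    {y ε L : ℝ} (hy : y ∈ Icc (0 : ℝ) 1) (hε : 0 ≤ ε)
    (hfar : ∀ t ∈ Icc a b, ε < |f t - y| → L ≤ |r * t - k|) :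
    |durrmeyerMean χ f a b r k - y| ≤
      ε + (∫ u in {u : ℝ | L ≤ |u|}, χ u) / ∫ u in (0 : ℝ)..1, χ u := by
  set s : Set ℝ := {u | L ≤ |u|}
  have hs : MeasurableSet s := measurableSet_le measurable_const measurable_abs
  set A := ∫ u in (0 : ℝ)..1, χ u
  set D := ∫ t in a..b, χ (r * t - k)
  set T := ∫ u in s, χ u
  have hD : A / r ≤ D := integral_div_le_integral_comp_mul_sub hχ hχ0 hr hka hkb
  have hDpos : 0 < D := (div_pos hA hr).trans_le hD
  have hsχ0 : ∀ u, 0 ≤ s.indicator χ u := indicator_nonneg fun u _ => hχ0 u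
  have htail : ∫ t in a..b, s.indicator χ (r * t - k) ≤ r⁻¹ * T := by
    simpa only [integral_indicator hs] using
      integral_comp_mul_sub_le_integral (hχ.indicator hs) hsχ0 hab hr k
  have hdev := abs_integral_mul_sub_mul_integral_le hab
    (hχ.comp_mul_sub hr.ne' k).intervalIntegrable
    ((hχ.indicator hs).comp_mul_sub hr.ne' k).intervalIntegrable hf (fun t _ => hχ0 _)
    (fun t _ => hsχ0 _) hε
    (fun t ht => abs_sub_le_of_nonneg_of_le (hf01 ht).1 (hf01 ht).2 hy.1 hy.2)
    (fun t ht hft => (indicator_of_mem (show r * t - k ∈ s from hfar t ht hft) χ).ge)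
  have hmean :
      durrmeyerMean χ f a b r k - y = ((∫ t in a..b, χ (r * t - k) * f t) - y * D) / D := by
    rw [sub_div, mul_div_cancel_right₀ _ hDpos.ne']
    rfl
  rw [hmean, abs_div, abs_of_pos hDpos, div_le_iff₀ hDpos]
  have hT : 0 ≤ T := setIntegral_nonneg hs fun u _ => hχ0 u
  calc |(∫ t in a..b, χ (r * t - k) * f t) - y * D| ≤ ε * D + r⁻¹ * T := hdev.trans (by gcongr)
    _ ≤ ε * D + T / A * D := by
        refine add_le_add le_rfl ?_
        calc r⁻¹ * T = T / A * (A / r) := by field_simp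
          _ ≤ T / A * D := by gcongr
    _ = (ε + T / A) * D := by ring

lemma eventually_abs_durrmeyerMean_sub_le (hχ0 : ∀ u, 0 ≤ χ u) (hχ : Integrable χ)
    (hA : 0 < ∫ u in (0 : ℝ)..1, χ u) (hab : a ≤ b) (hf : ContinuousOn f (Icc a b))
    (hf01 : MapsTo f (Icc a b) (Icc 0 1)) {ε : ℝ} (hε : 0 < ε) (R : ℝ) :
    ∀ᶠ r : ℝ in atTop, ∀ x ∈ Icc a b, ∀ k : ℝ, r * a ≤ k → k + 1 ≤ r * b → |r * x - k| < R →
      |durrmeyerMean χ f a b r k - f x| ≤ ε := by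
  obtain ⟨L, hL⟩ := ((tendsto_setIntegral_le_abs_atTop_zero hχ).eventually
    (ge_mem_nhds (by positivity : 0 < ε / 2 * ∫ u in (0 : ℝ)..1, χ u))).exists
  obtain ⟨η, hη, hfη⟩ := Metric.uniformContinuousOn_iff.1
    (isCompact_Icc.uniformContinuousOn_of_continuous hf) (ε / 2) (half_pos hε)
  filter_upwards [eventually_ge_atTop ((L + R) / η), eventually_gt_atTop 0]
    with r hrη hr x hx k hka hkb hkx
  have hfar : ∀ t ∈ Icc a b, ε / 2 < |f t - f x| → L ≤ |r * t - k| := by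
    intro t ht hft
    have htx : η ≤ |t - x| := by
      by_contra! h
      exact hft.not_gt (hfη t ht x hx h)
    have hrη' : L + R ≤ r * η := (div_le_iff₀ hη).1 hrη
    have : r * |t - x| ≤ |r * t - k| + |r * x - k| := by
      rw [← abs_of_pos hr, ← abs_mul, abs_of_pos hr,
        show r * (t - x) = r * t - k - (r * x - k) by ring]
      exact abs_sub _ _
    linarith [mul_le_mul_of_nonneg_left htx hr.le]
  calc |durrmeyerMean χ f a b r k - f x|
      ≤ ε / 2 + (∫ u in {u : ℝ | L ≤ |u|}, χ u) / ∫ u in (0 : ℝ)..1, χ u :=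
        abs_durrmeyerMean_sub_le hχ0 hχ hA hab hr hka hkb hf hf01 (hf01 hx) (half_pos hε).le hfar
    _ ≤ ε / 2 + ε / 2 := add_le_add le_rfl ((div_le_iff₀ hA).2 hL)
    _ = ε := add_halves ε

end DurrmeyerMean

lemma Dmm_eq_maxMin (χ σ : ℝ → ℝ) (a b : ℤ) (n : ℕ) (f : ℝ → ℝ) (x : ℝ) :
    Dmm χ σ a b n f x = maxMin (Icc ((n : ℤ) * a) (n * b - 1))
      (fun k => durrmeyerMean χ f a b n k) (fun k => phiSigma σ (n * x - k)) :=
  rfl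

lemma exists_mem_Icc_mul_sub_mem_Icc {a b : ℤ} (hab : a < b) {n : ℕ} (hn : 0 < n) {x : ℝ}
    (hx : x ∈ Icc (a : ℝ) b) :
    ∃ k ∈ Icc ((n : ℤ) * a) (n * b - 1), (n : ℝ) * x - k ∈ Icc (0 : ℝ) 1 := by
  have hn1 : (1 : ℤ) ≤ n := by exact_mod_cast hn
  have hK : (n : ℤ) * a ≤ n * b - 1 := by nlinarith
  have hfloor : (n : ℤ) * a ≤ ⌊(n : ℝ) * x⌋ := Int.le_floor.2 (by push_cast; gcongr; exact hx.1)
  refine ⟨min ⌊(n : ℝ) * x⌋ (n * b - 1), ⟨le_min hfloor hK, min_le_right _ _⟩, ?_, ?_⟩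
  · have hk : ((min ⌊(n : ℝ) * x⌋ (n * b - 1) : ℤ) : ℝ) ≤ ⌊(n : ℝ) * x⌋ := by
      exact_mod_cast min_le_left _ _
    linarith [Int.floor_le ((n : ℝ) * x)]
  · rcases min_cases ⌊(n : ℝ) * x⌋ ((n : ℤ) * b - 1) with ⟨h, -⟩ | ⟨h, -⟩ <;> rw [h]
    · linarith [Int.lt_floor_add_one ((n : ℝ) * x)]
    · have : (n : ℝ) * x ≤ n * b := by gcongr; exact hx.2
      push_cast
      linarith

section Dmm

variable {χ σ f : ℝ → ℝ} {a b : ℤ}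

lemma Dmm_mem_Icc (hχ0 : ∀ u, 0 ≤ χ u) (hχ : Integrable χ) (hmono : Monotone σ) (hab : a ≤ b)
    (hf : ContinuousOn f (Icc (a : ℝ) b)) (hf01 : MapsTo f (Icc (a : ℝ) b) (Icc 0 1)) {n : ℕ}
    (hn : 0 < n) (x : ℝ) : Dmm χ σ a b n f x ∈ Icc (0 : ℝ) 1 :=
  maxMin_mem_Icc
    (fun k _ => durrmeyerMean_mem_Icc hχ0 hχ (by exact_mod_cast hab) (by positivity) hf hf01)
    (fun k _ => phiSigma_nonneg hmono _)

theorem tendstoUniformlyOn_Dmm (hχ0 : ∀ u, 0 ≤ χ u) (hχ : Integrable χ)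
    (hA : 0 < ∫ u in (0 : ℝ)..1, χ u) (hmono : Monotone σ) (hbot : Tendsto σ atBot (𝓝 0))
    (htop : Tendsto σ atTop (𝓝 1)) (h31 : σ 1 < σ 3) (hconc : ConcaveOn ℝ (Ici 0) σ)
    (hab : a < b) (hf : ContinuousOn f (Icc (a : ℝ) b))
    (hf01 : MapsTo f (Icc (a : ℝ) b) (Icc 0 1)) :
    TendstoUniformlyOn (fun n : ℕ => Dmm χ σ a b n f) f atTop (Icc (a : ℝ) b) := by
  have hab' : (a : ℝ) ≤ b := by exact_mod_cast hab.le
  set δ := (σ 1 - σ 0) / 2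
  have hδ : 0 < δ := half_pos (sub_pos.2 (apply_zero_lt_apply_one_of_concaveOn hconc h31))
  rw [Metric.tendstoUniformlyOn_iff]
  intro ε hε
  set e := min (ε / 2) (1 / 2)
  have he : 0 < e := by positivity
  obtain ⟨R, -, hR⟩ := (atTop_basis.comap abs).eventually_iff.1
    ((tendsto_phiSigma_comap_abs_atTop hbot htop).eventually (ge_mem_nhds (mul_pos he hδ)))
  filter_upwards [tendsto_natCast_atTop_atTop.eventually
    (eventually_abs_durrmeyerMean_sub_le hχ0 hχ hA hab' hf hf01 he R), eventually_gt_atTop 0]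
    with n hmean hn x hx
  obtain ⟨k₀, hk₀, hk₀x⟩ := exists_mem_Icc_mul_sub_mem_Icc hab hn hx
  set K := Icc ((n : ℤ) * a) (n * b - 1)
  set w := fun k : ℤ => phiSigma σ (n * x - k)
  have hδS : δ ≤ sSup (w '' K) := le_csSup_of_le ((finite_Icc _ _).image w).bddAbove
    (mem_image_of_mem w hk₀) (sub_div_two_le_phiSigma hmono hk₀x)
  have hnear : ∀ k ∈ K, e * sSup (w '' K) < w k → |durrmeyerMean χ f a b n k - f x| ≤ e := by
    intro k hk hwk
    have hka : ((n : ℤ) * a : ℝ) ≤ k := by exact_mod_cast hk.1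
    have hkb : (k : ℝ) ≤ (n * b - 1 : ℤ) := by exact_mod_cast hk.2
    push_cast at hka hkb
    refine hmean x hx k hka (by linarith) ?_
    by_contra! hfar
    have : w k ≤ e * δ := hR hfar
    linarith [mul_le_mul_of_nonneg_left hδS he.le]
  rw [dist_comm, Real.dist_eq, Dmm_eq_maxMin]
  calc _ ≤ e := abs_maxMin_sub_le (finite_Icc _ _) (hf01 hx).1
        (by linarith [min_le_right (ε / 2) (1 / 2)])
        (fun k _ => (durrmeyerMean_mem_Icc hχ0 hχ hab' (by positivity) hf hf01).2)
        (hδ.trans_le hδS) hnear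
    _ < ε := (min_le_left _ _).trans_lt (half_lt_self hε)

end Dmm

lemma TendstoUniformlyOn.tendsto_iSup_abs_sub {ι α : Type*} {l : Filter ι} {F : ι → α → ℝ}
    {f : α → ℝ} {s : Set α} (h : TendstoUniformlyOn F f l s) :
    Tendsto (fun i => ⨆ x : s, |F i x - f x|) l (𝓝 0) := by
  rw [Metric.tendsto_nhds]
  intro ε hε
  filter_upwards [Metric.tendstoUniformlyOn_iff.1 h (ε / 2) (half_pos hε)] with i hi
  rw [Real.dist_0_eq_abs, abs_of_nonneg (Real.iSup_nonneg fun _ => abs_nonneg _)]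
  refine (Real.iSup_le (fun x => ?_) (half_pos hε).le).trans_lt (half_lt_self hε)
  rw [← Real.dist_eq, dist_comm]
  exact (hi x x.2).le

lemma intervalIntegral_abs_rpow_rpow_one_div_le {g : ℝ → ℝ} {a b p M : ℝ} (hab : a ≤ b)
    (hp : 0 < p) (hM : ∀ x ∈ Icc a b, |g x| ≤ M) :
    (∫ x in a..b, |g x| ^ p) ^ (1 / p) ≤ (b - a) ^ (1 / p) * M := by
  have hM0 : 0 ≤ M := (abs_nonneg _).trans (hM a (left_mem_Icc.2 hab))
  have hint : ∫ x in a..b, |g x| ^ p ≤ M ^ p * (b - a) := by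
    refine (Real.le_norm_self _).trans
      ((intervalIntegral.norm_integral_le_of_norm_le_const (C := M ^ p) fun x hx => ?_).trans_eq ?_)
    · rw [uIoc_of_le hab] at hx
      rw [Real.norm_eq_abs, abs_of_nonneg (by positivity)]
      exact Real.rpow_le_rpow (abs_nonneg _) (hM x (Ioc_subset_Icc_self hx)) hp.le
    · rw [abs_of_nonneg (sub_nonneg.2 hab)]
  calc (∫ x in a..b, |g x| ^ p) ^ (1 / p) ≤ (M ^ p * (b - a)) ^ (1 / p) := by
        gcongr
        exact intervalIntegral.integral_nonneg hab fun x _ => by positivity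
    _ = (b - a) ^ (1 / p) * M := by
        rw [Real.mul_rpow (by positivity) (sub_nonneg.2 hab), ← Real.rpow_mul hM0,
          mul_one_div_cancel hp.ne', Real.rpow_one, mul_comm]

theorem Dmm_uniform_and_Lp_convergence_general (χ σ : ℝ → ℝ)
    (hχ0 : ∀ t, 0 ≤ χ t) (hχint : Integrable χ)
    (hA : 0 < ∫ u in (0:ℝ)..1, χ u)
    (hmono : Monotone σ)
    (hbot : Filter.Tendsto σ Filter.atBot (nhds 0))
    (htop : Filter.Tendsto σ Filter.atTop (nhds 1))
    (h31 : σ 1 < σ 3)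
    (hconc : ConcaveOn ℝ (Set.Ici 0) σ)
    (a b : ℤ) (hab : a < b)
    (f : ℝ → ℝ) (hcont : ContinuousOn f (Set.Icc (a:ℝ) (b:ℝ)))
    (hf01 : ∀ t ∈ Set.Icc (a:ℝ) (b:ℝ), f t ∈ Set.Icc (0:ℝ) 1) :
    Filter.Tendsto (fun n : ℕ => ⨆ x : Set.Icc (a:ℝ) (b:ℝ), |Dmm χ σ a b n f x - f x|)
        Filter.atTop (nhds 0) ∧
      (∀ p : ℝ, 1 ≤ p → ∀ n : ℕ, 0 < n →
        (∫ x in (a:ℝ)..(b:ℝ), |Dmm χ σ a b n f x - f x| ^ p) ^ (1/p) ≤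
          ((b : ℝ) - (a : ℝ)) ^ (1/p) *
            ⨆ x : Set.Icc (a:ℝ) (b:ℝ), |Dmm χ σ a b n f x - f x|) ∧
      ∀ p : ℝ, 1 ≤ p →
        Filter.Tendsto
          (fun n : ℕ => (∫ x in (a:ℝ)..(b:ℝ), |Dmm χ σ a b n f x - f x| ^ p) ^ (1/p))
          Filter.atTop (nhds 0) := by
  have hab' : (a : ℝ) ≤ b := by exact_mod_cast hab.le
  have hsup := (tendstoUniformlyOn_Dmm hχ0 hχint hA hmono hbot htop h31 hconc hab hcont
    hf01).tendsto_iSup_abs_sub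
  have hLp : ∀ p : ℝ, 1 ≤ p → ∀ n : ℕ, 0 < n →
      (∫ x in (a:ℝ)..(b:ℝ), |Dmm χ σ a b n f x - f x| ^ p) ^ (1/p) ≤
        ((b : ℝ) - (a : ℝ)) ^ (1/p) * ⨆ x : Icc (a:ℝ) b, |Dmm χ σ a b n f x - f x| := by
    intro p hp n hn
    have hbdd : BddAbove (range fun x : Icc (a:ℝ) b => |Dmm χ σ a b n f x - f x|) := by
      refine ⟨1, forall_mem_range.2 fun x => ?_⟩
      obtain ⟨hD0, hD1⟩ := Dmm_mem_Icc hχ0 hχint hmono hab.le hcont hf01 hn x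
      exact abs_sub_le_of_nonneg_of_le hD0 hD1 (hf01 x x.2).1 (hf01 x x.2).2
    exact intervalIntegral_abs_rpow_rpow_one_div_le hab' (by linarith) fun x hx =>
      le_ciSup hbdd ⟨x, hx⟩
  refine ⟨hsup, hLp, fun p hp => ?_⟩
  refine squeeze_zero' (Eventually.of_forall fun n => Real.rpow_nonneg
      (intervalIntegral.integral_nonneg hab' fun x _ => by positivity) _)
    ((eventually_gt_atTop 0).mono (hLp p hp)) ?_
  simpa using hsup.const_mul (((b : ℝ) - a) ^ (1 / p))

theorem Dmm_uniform_and_Lp_convergence (χ σ : ℝ → ℝ) (α : ℝ) (hα : 0 < α)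
    (hχ0 : ∀ t, 0 ≤ χ t) (hχbdd : ∃ M, ∀ t, χ t ≤ M) (hχint : Integrable χ)
    (hA : 0 < ∫ u in (0:ℝ)..1, χ u)
    (hM0 : ∃ M : ℝ, ∀ t : ℝ, ∀ s : Finset ℤ, ∑ k ∈ s, χ (t - (k : ℝ)) ≤ M)
    (hmono : Monotone σ)
    (hbot : Filter.Tendsto σ Filter.atBot (nhds 0))
    (htop : Filter.Tendsto σ Filter.atTop (nhds 1))
    (h31 : σ 1 < σ 3)
    (hodd : ∀ x : ℝ, σ (-x) - 1/2 = -(σ x - 1/2))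
    (hC2 : ContDiff ℝ 2 σ) (hconc : ConcaveOn ℝ (Set.Ici 0) σ)
    (hdecay : ∃ C B : ℝ, 0 < C ∧ 0 < B ∧ ∀ x : ℝ, x ≤ -B → σ x ≤ C * |x| ^ (-(1 + α)))
    (a b : ℤ) (hab : a < b)
    (f : ℝ → ℝ) (hcont : ContinuousOn f (Set.Icc (a:ℝ) (b:ℝ)))
    (hf01 : ∀ t ∈ Set.Icc (a:ℝ) (b:ℝ), f t ∈ Set.Icc (0:ℝ) 1) :
    Filter.Tendsto (fun n : ℕ => ⨆ x : Set.Icc (a:ℝ) (b:ℝ), |Dmm χ σ a b n f x - f x|)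
        Filter.atTop (nhds 0) ∧
      (∀ p : ℝ, 1 ≤ p → ∀ n : ℕ, 0 < n →
        (∫ x in (a:ℝ)..(b:ℝ), |Dmm χ σ a b n f x - f x| ^ p) ^ (1/p) ≤
          ((b : ℝ) - (a : ℝ)) ^ (1/p) *
            ⨆ x : Set.Icc (a:ℝ) (b:ℝ), |Dmm χ σ a b n f x - f x|) ∧
      ∀ p : ℝ, 1 ≤ p →
        Filter.Tendsto
          (fun n : ℕ => (∫ x in (a:ℝ)..(b:ℝ), |Dmm χ σ a b n f x - f x| ^ p) ^ (1/p))
          Filter.atTop (nhds 0) :=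
  Dmm_uniform_and_Lp_convergence_general χ σ hχ0 hχint hA hmono hbot htop h31 hconc a b hab f hcont
    hf01
end
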